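/- No traditional Kochen–Specker proof from product-eigenbasis contexts: let 𝒜 be a set of self-adjoint operators on (ℂ²)^{⊗n} such that for every subset C ⊆ 𝒜 of pairwise-commuting operators there exists an orthonormal basis of (ℂ²)^{⊗n} consisting of product vectors each of which is an eigenvector of every member of C. Then there exists a map v : 𝒜 → ℝ satisfying (SPEC) v(A) belongs to the spectrum of A for every A ∈ 𝒜, and (FUNC) v(g(A)) = g(v(A)) for every A ∈ 𝒜 and every function g : ℝ → ℝ such that g(A) ∈ 𝒜, where g(A) is defined by the functional calculus (if A = Σⱼ λⱼ Πⱼ is the spectral decomposition of A, then g(A) = Σⱼ g(λⱼ) Πⱼ). -/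

import Mathlib

open scoped InnerProductSpace
open MeasureTheory

noncomputable section

abbrev Qubit : Type := EuclideanSpace ℂ (Fin 2)
abbrev NQubit (n : ℕ) : Type := EuclideanSpace ℂ (Fin n → Fin 2)

/-- The product vector `ψ₁ ⊗ ⋯ ⊗ ψₙ` in `(ℂ²)^{⊗n}`, modelled concretely as
`EuclideanSpace ℂ (Fin n → Fin 2)`; its inner products satisfy
`⟨tens ψ, tens χ⟩ = ∏ j, ⟨ψ j, χ j⟩`. -/
noncomputable def tens {n : ℕ} (ψ : Fin n → Qubit) : NQubit n :=
  WithLp.toLp 2 (fun f => ∏ j, ψ j (f j))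

/-- A vector of `(ℂ²)^{⊗n}` is a product vector if it is of the form `ψ₁ ⊗ ⋯ ⊗ ψₙ`. -/
def IsProduct {n : ℕ} (v : NQubit n) : Prop := ∃ ψ : Fin n → Qubit, v = tens ψ

/-- A finite set of vectors forming an orthonormal basis of `H`. -/
def IsONBasis {H : Type*} [NormedAddCommGroup H] [InnerProductSpace ℂ H]
    (B : Finset H) : Prop :=
  Orthonormal ℂ (fun v : B => (v : H)) ∧ Submodule.span ℂ (B : Set H) = ⊤

/-- A KS-colouring of a set `S` of unit vectors: a `{0,1}`-valued map (modelled as a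
predicate, `c v` meaning value `1`) such that every orthonormal basis contained in `S`
has exactly one element of value `1`, and no two mutually orthogonal elements of `S`
both have value `1`. -/
def IsKSColouring {H : Type*} [NormedAddCommGroup H] [InnerProductSpace ℂ H]
    (S : Set H) (c : H → Prop) : Prop :=
  (∀ B : Finset H, ↑B ⊆ S → IsONBasis B → ∃! v, v ∈ B ∧ c v) ∧
  (∀ ψ ∈ S, ∀ χ ∈ S, ⟪ψ, χ⟫_ℂ = 0 → ¬(c ψ ∧ c χ))
/-- `FunctionalOf g A B` says that `B = g(A)` in the sense of the functional calculus of
the self-adjoint operator `A`: on each eigenspace of `A` with eigenvalue `μ`, `B` acts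
as multiplication by `g μ` (for a self-adjoint operator on a finite-dimensional space,
whose eigenvectors span, this characterises `g(A) = Σⱼ g(λⱼ) Πⱼ`). -/
def FunctionalOf {n : ℕ} (g : ℝ → ℝ)
    (A B : NQubit n →ₗ[ℂ] NQubit n) : Prop :=
  ∀ (μ : ℝ) (v : NQubit n), A v = (μ : ℂ) • v → B v = ((g μ : ℝ) : ℂ) • v


/-!
Orthogonal qubit vectors have antiparallel Bloch vectors, so marking a qubit when its Bloch
vector is lexicographically positive marks exactly one of any two orthogonal qubits. Distinct
members of an orthonormal product basis of `(ℂ²)^{⊗n}` are orthogonal in some factor, hence have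
distinct mark patterns in `{0,1}^n`; there are `2^n` of them, so one of them is marked in every
factor. Two such fully marked product vectors are never orthogonal, so all fully marked
eigenvectors of a self-adjoint `A` share one eigenvalue, and this is `v(A)`. (FUNC) holds
because a marked eigenvector of `A` with eigenvalue `λ` is one of `g(A)` with eigenvalue `g(λ)`.
-/

open scoped ComplexConjugate

lemma toLex_smul_pos_iff {ι : Type*} [LinearOrder ι] [WellFoundedLT ι] {t : ℝ} (ht : 0 < t)
    (x : ι → ℝ) : 0 < toLex (t • x) ↔ 0 < toLex x := by
  change Pi.Lex (· < ·) (· < ·) (0 : ι → ℝ) (t • x) ↔ Pi.Lex (· < ·) (· < ·) (0 : ι → ℝ) x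
  simp only [Pi.Lex, Pi.smul_apply, smul_eq_mul, Pi.zero_apply, mul_pos_iff_of_pos_left ht,
    mul_eq_zero, ht.ne', false_or, eq_comm]

lemma LinearMap.IsSymmetric.exists_real_of_apply_eq_smul {𝕜 E : Type*} [RCLike 𝕜]
    [NormedAddCommGroup E] [InnerProductSpace 𝕜 E] {A : E →ₗ[𝕜] E} (hA : A.IsSymmetric)
    {v : E} {μ : 𝕜} (hv : v ≠ 0) (h : A v = μ • v) : ∃ r : ℝ, A v = (r : 𝕜) • v := by
  have hμ : Module.End.HasEigenvalue A μ :=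
    Module.End.hasEigenvalue_of_hasEigenvector ⟨Module.End.mem_eigenspace_iff.2 h, hv⟩
  obtain ⟨r, rfl⟩ := RCLike.conj_eq_iff_real.1 (hA.conj_eigenvalue_eq_self hμ)
  exact ⟨r, h⟩

lemma LinearMap.IsSymmetric.eq_of_inner_ne_zero {𝕜 E : Type*} [RCLike 𝕜]
    [NormedAddCommGroup E] [InnerProductSpace 𝕜 E] {A : E →ₗ[𝕜] E} (hA : A.IsSymmetric)
    {v w : E} {μ ν : 𝕜} (hv : A v = μ • v) (hw : A w = ν • w) (h : ⟪v, w⟫_𝕜 ≠ 0) : μ = ν := by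
  by_contra hμν
  exact h (hA.orthogonalFamily_eigenspaces hμν ⟨v, Module.End.mem_eigenspace_iff.2 hv⟩
    ⟨w, Module.End.mem_eigenspace_iff.2 hw⟩)

lemma IsONBasis.finrank_le_card {H : Type*} [NormedAddCommGroup H] [InnerProductSpace ℂ H]
    {B : Finset H} (hB : IsONBasis B) : Module.finrank ℂ H ≤ B.card := by
  have h := finrank_span_finset_le_card (R := ℂ) B
  rwa [Set.finrank, hB.2, finrank_top] at h

namespace Qubit

lemma inner_eq (ψ χ : Qubit) : ⟪ψ, χ⟫_ℂ = conj (ψ 0) * χ 0 + conj (ψ 1) * χ 1 := by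
  simp [PiLp.inner_apply, Fin.sum_univ_two, mul_comm]

lemma norm_sq_eq (ψ : Qubit) : ‖ψ‖ ^ 2 = Complex.normSq (ψ 0) + Complex.normSq (ψ 1) := by
  simp [EuclideanSpace.norm_sq_eq, Fin.sum_univ_two, Complex.normSq_eq_norm_sq]

/-- `‖ψ‖²` times the Bloch vector of `ψ`, in the coordinates `(z, x/2, y/2)`. -/
def blochVector (ψ : Qubit) : Fin 3 → ℝ :=
  ![Complex.normSq (ψ 0) - Complex.normSq (ψ 1), (conj (ψ 0) * ψ 1).re, (conj (ψ 0) * ψ 1).im]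

lemma blochVector_ne_zero {ψ : Qubit} (hψ : ψ ≠ 0) : blochVector ψ ≠ 0 := by
  intro h
  have hz : Complex.normSq (ψ 0) = Complex.normSq (ψ 1) := by
    have := congrFun h 0
    simp only [blochVector, Matrix.cons_val_zero, Pi.zero_apply] at this
    linarith
  have hw : conj (ψ 0) * ψ 1 = 0 := Complex.ext (congrFun h 1) (congrFun h 2)
  have h01 : ψ 0 = 0 ∧ ψ 1 = 0 := by
    rcases mul_eq_zero.mp hw with h0 | h1
    · rw [map_eq_zero] at h0
      rw [h0, map_zero, eq_comm, Complex.normSq_eq_zero] at hz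
      exact ⟨h0, hz⟩
    · rw [h1, map_zero, Complex.normSq_eq_zero] at hz
      exact ⟨hz, h1⟩
  exact hψ (by ext i; fin_cases i <;> simp [h01.1, h01.2])

lemma smul_blochVector_of_inner_eq_zero {ψ χ : Qubit} (h : ⟪ψ, χ⟫_ℂ = 0) :
    ‖ψ‖ ^ 2 • blochVector χ = -(‖χ‖ ^ 2 • blochVector ψ) := by
  rw [inner_eq] at h
  set a := ψ 0; set b := ψ 1; set x := χ 0; set y := χ 1
  have hz : Complex.normSq a * Complex.normSq x = Complex.normSq b * Complex.normSq y := by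
    simpa [Complex.normSq_mul] using congrArg Complex.normSq (eq_neg_of_add_eq_zero_left h)
  have hw : ((‖ψ‖ ^ 2 : ℝ) : ℂ) * (conj x * y) = -(((‖χ‖ ^ 2 : ℝ) : ℂ) * (conj a * b)) := by
    have h' : a * conj x + b * conj y = 0 := by simpa using congrArg conj h
    simp only [norm_sq_eq, Complex.ofReal_add, Complex.normSq_eq_conj_mul_self]
    linear_combination (conj x * b) * h + (conj a * y) * h'
  ext i
  fin_cases i
  · simp [blochVector, norm_sq_eq]
    linear_combination 2 * hz
  · exact (by simpa only [Complex.neg_re, Complex.re_ofReal_mul] using congrArg Complex.re hw :)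
  · exact (by simpa only [Complex.neg_im, Complex.im_ofReal_mul] using congrArg Complex.im hw :)

def IsMarked (ψ : Qubit) : Prop := 0 < toLex (blochVector ψ)

lemma isMarked_iff_not_of_inner_eq_zero {ψ χ : Qubit} (hψ : ψ ≠ 0) (hχ : χ ≠ 0)
    (h : ⟪ψ, χ⟫_ℂ = 0) : IsMarked χ ↔ ¬ IsMarked ψ := by
  have hne : toLex (‖χ‖ ^ 2 • blochVector ψ) ≠ 0 :=
    smul_ne_zero (pow_ne_zero 2 (norm_ne_zero_iff.2 hχ)) (blochVector_ne_zero hψ)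
  calc IsMarked χ ↔ 0 < toLex (‖ψ‖ ^ 2 • blochVector χ) :=
        (toLex_smul_pos_iff (pow_pos (norm_pos_iff.2 hψ) 2) _).symm
    _ ↔ 0 < -toLex (‖χ‖ ^ 2 • blochVector ψ) := by
        rw [smul_blochVector_of_inner_eq_zero h]; rfl
    _ ↔ ¬ 0 < toLex (‖χ‖ ^ 2 • blochVector ψ) :=
        neg_pos.trans ⟨lt_asymm, fun h => (not_lt.1 h).lt_of_ne hne⟩
    _ ↔ ¬ IsMarked ψ := by rw [toLex_smul_pos_iff (pow_pos (norm_pos_iff.2 hχ) 2)]; rfl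

lemma inner_ne_zero_of_isMarked_iff {ψ χ : Qubit} (hψ : ψ ≠ 0) (hχ : χ ≠ 0)
    (h : IsMarked ψ ↔ IsMarked χ) : ⟪ψ, χ⟫_ℂ ≠ 0 := fun h0 => by
  have := isMarked_iff_not_of_inner_eq_zero hψ hχ h0
  tauto

end Qubit

open Qubit

lemma exists_forall_isMarked {ι : Type*} [Fintype ι] {n : ℕ} (ψ : ι → Fin n → Qubit)
    (hψ : ∀ k j, ψ k j ≠ 0) (horth : Pairwise fun k l => ∃ j, ⟪ψ k j, ψ l j⟫_ℂ = 0)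
    (hcard : 2 ^ n ≤ Fintype.card ι) : ∃ k, ∀ j, IsMarked (ψ k j) := by
  classical
  let pattern : ι → Fin n → Prop := fun k j => IsMarked (ψ k j)
  have hinj : pattern.Injective := fun k l hkl => by
    by_contra hne
    obtain ⟨j, hj⟩ := horth hne
    exact inner_ne_zero_of_isMarked_iff (hψ k j) (hψ l j) (Iff.of_eq (congrFun hkl j)) hj
  have hbij : pattern.Bijective := (Fintype.bijective_iff_injective_and_card pattern).2
    ⟨hinj, le_antisymm (Fintype.card_le_of_injective _ hinj) (by simpa using hcard)⟩
  obtain ⟨k, hk⟩ := hbij.2 fun _ => True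
  exact ⟨k, fun j => of_eq_true (congrFun hk j)⟩

section Product

variable {n : ℕ}

lemma inner_tens (ψ χ : Fin n → Qubit) : ⟪tens ψ, tens χ⟫_ℂ = ∏ j, ⟪ψ j, χ j⟫_ℂ := by
  simp only [tens, PiLp.inner_apply, RCLike.inner_apply, map_prod]
  rw [Finset.prod_univ_sum, Fintype.piFinset_univ]
  exact Finset.sum_congr rfl fun f _ => Finset.prod_mul_distrib.symm

lemma ne_zero_of_tens_ne_zero {ψ : Fin n → Qubit} (h : tens ψ ≠ 0) (j : Fin n) : ψ j ≠ 0 := by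
  intro hj
  apply h
  ext f
  exact Finset.prod_eq_zero (Finset.mem_univ j) (by rw [hj]; rfl)

def IsMarkedProduct (v : NQubit n) : Prop := ∃ ψ : Fin n → Qubit, v = tens ψ ∧ ∀ j, IsMarked (ψ j)

lemma inner_ne_zero_of_isMarkedProduct {v w : NQubit n} (hv : v ≠ 0) (hw : w ≠ 0)
    (hmv : IsMarkedProduct v) (hmw : IsMarkedProduct w) : ⟪v, w⟫_ℂ ≠ 0 := by
  obtain ⟨ψ, rfl, hψ⟩ := hmv
  obtain ⟨χ, rfl, hχ⟩ := hmw
  rw [inner_tens, Finset.prod_ne_zero_iff]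
  exact fun j _ => inner_ne_zero_of_isMarked_iff (ne_zero_of_tens_ne_zero hv j)
    (ne_zero_of_tens_ne_zero hw j) (iff_of_true (hψ j) (hχ j))

lemma IsONBasis.exists_isMarkedProduct {B : Finset (NQubit n)} (hB : IsONBasis B)
    (hprod : ∀ v ∈ B, IsProduct v) : ∃ v ∈ B, v ≠ 0 ∧ IsMarkedProduct v := by
  choose ψ hψ using fun v : B => hprod v v.2
  have hψ0 : ∀ v j, ψ v j ≠ 0 := fun v j => ne_zero_of_tens_ne_zero (hψ v ▸ hB.1.ne_zero v) j
  have horth : Pairwise fun v w => ∃ j, ⟪ψ v j, ψ w j⟫_ℂ = 0 := fun v w hvw => by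
    have h : ⟪(v : NQubit n), w⟫_ℂ = 0 := hB.1.2 hvw
    rw [hψ v, hψ w, inner_tens, Finset.prod_eq_zero_iff] at h
    exact h.imp fun _ => And.right
  have hcard : 2 ^ n ≤ Fintype.card B := by
    simpa using hB.finrank_le_card
  obtain ⟨v, hv⟩ := exists_forall_isMarked ψ hψ0 horth hcard
  exact ⟨v, v.2, hB.1.ne_zero v, ψ v, hψ v, hv⟩

/-- An arbitrary real (`Classical.epsilon`) when `A` has no marked product eigenvector. -/
def markedEigenvalue (A : NQubit n →ₗ[ℂ] NQubit n) : ℝ :=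
  Classical.epsilon fun r : ℝ => ∃ v, v ≠ 0 ∧ IsMarkedProduct v ∧ A v = (r : ℂ) • v

variable {A : NQubit n →ₗ[ℂ] NQubit n}

lemma markedEigenvalue_eq (hA : A.IsSymmetric) {v : NQubit n} {r : ℝ} (hv : v ≠ 0)
    (hmv : IsMarkedProduct v) (hAv : A v = (r : ℂ) • v) : markedEigenvalue A = r := by
  obtain ⟨w, hw, hmw, hAw⟩ := Classical.epsilon_spec
    (p := fun r : ℝ => ∃ v, v ≠ 0 ∧ IsMarkedProduct v ∧ A v = (r : ℂ) • v) ⟨r, v, hv, hmv, hAv⟩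
  exact_mod_cast hA.eq_of_inner_ne_zero hAw hAv (inner_ne_zero_of_isMarkedProduct hw hv hmw hmv)

lemma exists_isMarkedProduct_apply_eq_markedEigenvalue_smul (hA : A.IsSymmetric)
    {B : Finset (NQubit n)} (hB : IsONBasis B) (hprod : ∀ v ∈ B, IsProduct v)
    (heig : ∀ v ∈ B, ∃ μ : ℂ, A v = μ • v) :
    ∃ v, v ≠ 0 ∧ IsMarkedProduct v ∧ A v = (markedEigenvalue A : ℂ) • v := by
  obtain ⟨v, hvB, hv, hmv⟩ := hB.exists_isMarkedProduct hprod
  obtain ⟨μ, hμ⟩ := heig v hvB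
  obtain ⟨r, hr⟩ := hA.exists_real_of_apply_eq_smul hv hμ
  exact ⟨v, hv, hmv, markedEigenvalue_eq hA hv hmv hr ▸ hr⟩

end Product

/-- no traditional KS proof from product-eigenbasis contexts: if `𝒜` is a
set of self-adjoint operators on `(ℂ²)^{⊗n}` such that every pairwise-commuting subset
of `𝒜` admits a simultaneous orthonormal eigenbasis consisting of product vectors, then
there is a valuation `val : 𝒜 → ℝ` satisfying (SPEC) `val A` is an eigenvalue of `A`,
and (FUNC) `val (g(A)) = g (val A)` whenever `g : ℝ → ℝ` and `g(A) ∈ 𝒜`. -/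
theorem no_traditional_KS_proof_from_product_contexts
    (n : ℕ) (𝒜 : Set (NQubit n →ₗ[ℂ] NQubit n))
    (hsa : ∀ A ∈ 𝒜, ∀ x y : NQubit n, ⟪A x, y⟫_ℂ = ⟪x, A y⟫_ℂ)
    (hctx : ∀ C ⊆ 𝒜, (∀ A ∈ C, ∀ B ∈ C, A ∘ₗ B = B ∘ₗ A) →
      ∃ Bas : Finset (NQubit n), IsONBasis Bas ∧ (∀ v ∈ Bas, IsProduct v) ∧
        ∀ v ∈ Bas, ∀ A ∈ C, ∃ μ : ℂ, A v = μ • v) :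
    ∃ val : (NQubit n →ₗ[ℂ] NQubit n) → ℝ,
      (∀ A ∈ 𝒜, ∃ w : NQubit n, w ≠ 0 ∧ A w = ((val A : ℝ) : ℂ) • w) ∧
      (∀ A ∈ 𝒜, ∀ B ∈ 𝒜, ∀ g : ℝ → ℝ, FunctionalOf g A B → val B = g (val A)) := by
  have marked_eigenvector : ∀ A ∈ 𝒜,
      ∃ v, v ≠ 0 ∧ IsMarkedProduct v ∧ A v = (markedEigenvalue A : ℂ) • v := by
    intro A hA
    obtain ⟨B, hB, hprod, heig⟩ := hctx {A} (Set.singleton_subset_iff.2 hA) (by simp)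
    exact exists_isMarkedProduct_apply_eq_markedEigenvalue_smul (hsa A hA) hB hprod
      fun v hv => heig v hv A rfl
  refine ⟨markedEigenvalue, fun A hA => ?_, fun A hA B hB g hg => ?_⟩
  · obtain ⟨v, hv, -, hAv⟩ := marked_eigenvector A hA
    exact ⟨v, hv, hAv⟩
  · obtain ⟨v, hv, hmv, hAv⟩ := marked_eigenvector A hA
    exact markedEigenvalue_eq (hsa B hB) hv hmv (hg _ v hAv)
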